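/- Let A, B be finite vertex sets with |A ∩ B| ≤ n + 1. Then the map (X,Y) ↦ X + Y from Z_n(A) ⊕ Z_n(B) (pairs of integral n-cycles) to Z_n(A ∪ B) is injective. -/

import Mathlib

/-- Oriented `n`-simplices on vertex set `ℕ`, represented by their vertex sets
(of size `n+1`), with the orientation given by increasing order. -/
abbrev Simp (n : ℕ) : Type := {s : Finset ℕ // s.card = n + 1}

/-- Simplicial `n`-chains with coefficients in `R`. -/
abbrev GChain (R : Type) [CommRing R] (n : ℕ) : Type := Simp n →₀ R

/-- Integral simplicial `n`-chains. -/
abbrev ZChain (n : ℕ) : Type := GChain ℤ n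

/-- Boundary of a single oriented `(n+1)`-simplex. -/
noncomputable def simpBdry (R : Type) [CommRing R] {n : ℕ} (s : Simp (n + 1)) :
    GChain R n :=
  ∑ v ∈ (s : Finset ℕ).attach,
    ((-1 : R) ^ (((s : Finset ℕ).filter (· < (v : ℕ))).card)) •
      Finsupp.single
        ⟨(s : Finset ℕ).erase (v : ℕ), by
          have hv := v.2
          simp [Finset.card_erase_of_mem hv, s.2]⟩ 1

/-- The simplicial boundary operator. -/
noncomputable def bdry {R : Type} [CommRing R] {n : ℕ} (M : GChain R (n + 1)) :
    GChain R n :=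
  M.sum fun s c => c • simpBdry R s

/-- The `L¹`-norm of an integral chain. -/
noncomputable def znorm {n : ℕ} (M : ZChain n) : ℕ :=
  M.sum fun _ c => c.natAbs

/-- The set of vertices of simplices with nonzero coefficient. -/
noncomputable def vert {R : Type} [CommRing R] {n : ℕ} (M : GChain R n) : Finset ℕ :=
  M.support.sup fun s => (s : Finset ℕ)

/-- The chain is supported on simplices with vertices in `A`. -/
def suppOn {R : Type} [CommRing R] {n : ℕ} (A : Finset ℕ) (M : GChain R n) : Prop :=
  ∀ s ∈ M.support, (s : Finset ℕ) ⊆ A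

/-- Total multiplicity in `M` of simplices containing the vertex `x`. -/
noncomputable def zdeg {n : ℕ} (x : ℕ) (M : ZChain n) : ℕ :=
  M.sum fun s c => if x ∈ (s : Finset ℕ) then c.natAbs else 0

/-- Maximum vertex degree of an integral chain. -/
noncomputable def zmaxdeg {n : ℕ} (M : ZChain n) : ℕ :=
  (vert M).sup fun x => zdeg x M

/-- The cone from the vertex `x` over the chain `U`: each oriented simplex of `U`
gets `x` adjoined as a new first vertex; simplices already containing `x`
contribute `0`. -/
noncomputable def cone {n : ℕ} (x : ℕ) (U : ZChain n) : ZChain (n + 1) :=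
  U.sum fun s c =>
    if h : x ∈ (s : Finset ℕ) then 0
    else
      (((-1 : ℤ) ^ (((s : Finset ℕ).filter (· < x)).card)) * c) •
        Finsupp.single ⟨insert x (s : Finset ℕ), by
          simp [Finset.card_insert_of_notMem h, s.2]⟩ 1

/-- `Zvol X`: the minimal `L¹`-norm of an integral filling of `X`. -/
noncomputable def zvol {n : ℕ} (X : ZChain n) : ℕ :=
  sInf {m : ℕ | ∃ M : ZChain (n + 1), bdry M = X ∧ znorm M = m}

/-- A chain is taut if it is an optimal filling of its boundary. -/
def Taut {n : ℕ} (M : ZChain (n + 1)) : Prop :=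
  znorm M = zvol (bdry M)

/-! The difference `X - X' = Y' - Y` is a cycle supported on `A ∩ B`, a set of at most `n + 2`
vertices, and a cycle of dimension `n + 1` on so few vertices vanishes. -/

section Chains

variable {R : Type} [CommRing R] {n : ℕ}

lemma bdry_sub (M N : GChain R (n + 1)) : bdry (M - N) = bdry M - bdry N :=
  Finsupp.sum_sub_index fun _ _ _ => sub_smul _ _ _

lemma bdry_single (s : Simp (n + 1)) (c : R) : bdry (Finsupp.single s c) = c • simpBdry R s :=
  Finsupp.sum_single_index (zero_smul R _)

lemma simpBdry_apply_erase (s : Simp (n + 1)) {v : ℕ} (hv : v ∈ (s : Finset ℕ))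
    (hcard : ((s : Finset ℕ).erase v).card = n + 1) :
    simpBdry R s ⟨(s : Finset ℕ).erase v, hcard⟩
      = (-1 : R) ^ (((s : Finset ℕ).filter (· < v)).card) := by
  simp only [simpBdry, Finsupp.coe_finsetSum, Finset.sum_apply, Finsupp.smul_apply]
  rw [Finset.sum_eq_single ⟨v, hv⟩]
  · simp
  · rintro ⟨w, hw⟩ _ hwv
    have hne : (s : Finset ℕ).erase w ≠ (s : Finset ℕ).erase v := fun he =>
      hwv (Subtype.ext (Finset.erase_injOn _ hw hv he))
    simp [hne]
  · simp

lemma eq_zero_of_bdry_single_eq_zero {s : Simp (n + 1)} {c : R}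
    (h : bdry (Finsupp.single s c) = 0) : c = 0 := by
  obtain ⟨v, hv⟩ : (s : Finset ℕ).Nonempty := by
    rw [← Finset.card_pos, s.2]; omega
  have hcard : ((s : Finset ℕ).erase v).card = n + 1 := by
    rw [Finset.card_erase_of_mem hv, s.2]; rfl
  have hface := congrArg (· ⟨(s : Finset ℕ).erase v, hcard⟩) h
  simp only [bdry_single, Finsupp.smul_apply, simpBdry_apply_erase s hv, smul_eq_mul,
    Finsupp.coe_zero, Pi.zero_apply] at hface
  simpa using hface

lemma suppOn_sub {A : Finset ℕ} {M N : GChain R n} (hM : suppOn A M) (hN : suppOn A N) :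
    suppOn A (M - N) := fun s hs =>
  (Finset.mem_union.1 (Finsupp.support_sub hs)).elim (hM s) (hN s)

lemma suppOn_inter {A B : Finset ℕ} {M : GChain R n} (hA : suppOn A M) (hB : suppOn B M) :
    suppOn (A ∩ B) M := fun s hs => Finset.subset_inter (hA s hs) (hB s hs)

/-- On at most `n + 2` vertices the only candidate `(n + 1)`-simplex is the whole vertex set,
and its boundary does not vanish. -/
theorem eq_zero_of_bdry_eq_zero_of_card_le {C : Finset ℕ} (hC : C.card ≤ n + 2)
    {M : GChain R (n + 1)} (hM : suppOn C M) (hcycle : bdry M = 0) : M = 0 := by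
  by_contra hne
  obtain ⟨s, hs⟩ := Finsupp.support_nonempty_iff.2 hne
  have hsC : ∀ t ∈ M.support, (t : Finset ℕ) = C := fun t ht =>
    Finset.eq_of_subset_of_card_le (hM t ht) (by rw [t.2]; exact hC)
  have hsingle : M = Finsupp.single s (M s) :=
    Finsupp.support_subset_singleton.1 fun t ht =>
      Finset.mem_singleton.2 (Subtype.ext ((hsC t ht).trans (hsC s hs).symm))
  rw [hsingle] at hcycle
  exact Finsupp.mem_support_iff.1 hs (eq_zero_of_bdry_single_eq_zero hcycle)

end Chains

theorem recover_cycles_general {n : ℕ} (A B : Finset ℕ) (h : (A ∩ B).card ≤ n + 2)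
    (X X' : ZChain (n + 1)) (Y Y' : ZChain (n + 1))
    (hXc : bdry X = 0) (hX'c : bdry X' = 0)
    (hX : suppOn A X) (hX' : suppOn A X') (hY : suppOn B Y) (hY' : suppOn B Y')
    (hsum : X + Y = X' + Y') : X = X' ∧ Y = Y' := by
  have hdiff : X - X' = Y' - Y := by
    rw [sub_eq_sub_iff_add_eq_add, hsum]
    exact add_comm X' Y'
  have hzero : X - X' = 0 := by
    refine eq_zero_of_bdry_eq_zero_of_card_le h (suppOn_inter (suppOn_sub hX hX') ?_) ?_
    · exact hdiff ▸ suppOn_sub hY' hY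
    · rw [bdry_sub, hXc, hX'c, sub_zero]
  have hXX' : X = X' := sub_eq_zero.1 hzero
  exact ⟨hXX', add_left_cancel (hXX' ▸ hsum)⟩

/-- if `|A ∩ B| ≤ n + 1`, an `n`-cycle supported on `A` plus an
`n`-cycle supported on `B` determines the two summands.  (Here `n`-cycles are
represented by chains of dimension `n + 1` in the `ZChain` indexing, i.e. the
hypothesis reads `|A ∩ B| ≤ (n + 1) + 1`.) -/
theorem recover_cycles {n : ℕ} (A B : Finset ℕ) (h : (A ∩ B).card ≤ n + 2)
    (X X' : ZChain (n + 1)) (Y Y' : ZChain (n + 1))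
    (hXc : bdry X = 0) (hX'c : bdry X' = 0) (hYc : bdry Y = 0) (hY'c : bdry Y' = 0)
    (hX : suppOn A X) (hX' : suppOn A X') (hY : suppOn B Y) (hY' : suppOn B Y')
    (hsum : X + Y = X' + Y') : X = X' ∧ Y = Y' :=
  recover_cycles_general A B h X X' Y Y' hXc hX'c hX hX' hY hY' hsum
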